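/- Let G = (U, V, E) be a bipartite graph with |U| = |V| = n, edges colored red or blue, that has a perfect matching with an even number of red edges but no perfect matching with an odd number of red edges. Then the linear program {x ≥ 0 : Σ_{e∈δ(w)} x_e = 1 for all vertices w, and Σ_{e∈E_L} x_e ≥ 1 for all labelings L with |L⁻¹(1)| ≡ n (mod 2)} is infeasible. -/

import Mathlib

/-!
Every edge in the support of a feasible `x` lies in a perfect matching (Birkhoff–von Neumann), so
it suffices to find a labeling of the right parity violated by no such allowed edge. Fix a perfect
matching `M₀` and turn each allowed edge `(u, v)` into an arc from `u` to the `M₀`-partner `u'` of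
`v`, of weight `red(u, v) + red(u', v)` in `ZMod 2`. Cycle covers of this digraph are the perfect
matchings `N`, of weight `red N + red M₀ = 0`; a simple cycle completed by the zero-weight loops of
`M₀` is a cycle cover, so every closed walk has weight `0`, and every arc lies on a closed walk
inside the permutation of a matching containing it. Hence the weights are the differences of a
potential `p`, and `L(u) = p u`, `L(v) = p u' + red(u', v) + 1` violates no allowed edge; summing
the labels along `M₀` gives the parity `n + red M₀ ≡ n`.
-/

/-- An edge of the colored bipartite multigraph: left endpoint, right endpoint,
color (`true` = red, `false` = blue). -/
abbrev ColEdge (n : ℕ) := Fin n × Fin n × Bool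

/-- `M` is a perfect matching of the graph with edge set `E`. -/
def IsPM {n : ℕ} (E M : Finset (ColEdge n)) : Prop :=
  M ⊆ E ∧
  (∀ u : Fin n, (M.filter (fun e => e.1 = u)).card = 1) ∧
  (∀ v : Fin n, (M.filter (fun e => e.2.1 = v)).card = 1)

/-- The edge `e` violates the labeling `(LU, LV)`: blue with equal labels, or
red with different labels. -/
def Violates {n : ℕ} (LU LV : Fin n → Bool) (e : ColEdge n) : Prop :=
  (e.2.2 = false ∧ LU e.1 = LV e.2.1) ∨ (e.2.2 = true ∧ LU e.1 ≠ LV e.2.1)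

instance {n : ℕ} (LU LV : Fin n → Bool) : DecidablePred (Violates LU LV) :=
  fun e => by unfold Violates; infer_instance

open Finset Function

theorem List.exists_eq_append_of_not_nodup_map {α β : Type*} {f : α → β} {l : List α}
    (h : ¬ (l.map f).Nodup) :
    ∃ l₁ a l₂ b l₃, l = l₁ ++ a :: l₂ ++ b :: l₃ ∧ f a = f b := by
  obtain ⟨x, hx⟩ := not_forall_not.1 (mt List.nodup_iff_sublist.2 h)
  obtain ⟨l', hl', hxx⟩ := List.sublist_map_iff.1 hx
  rcases l' with _ | ⟨a, _ | ⟨b, _ | ⟨c, l'⟩⟩⟩ <;> simp only [List.map_cons, List.map_nil,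
    List.cons.injEq, reduceCtorEq, and_false] at hxx
  obtain ⟨r₁, r₂, rfl, ha, hb⟩ := List.cons_sublist_iff.1 hl'
  obtain ⟨l₁, l₂, rfl⟩ := List.append_of_mem ha
  obtain ⟨l₃, l₄, rfl⟩ := List.append_of_mem (List.singleton_sublist.1 hb)
  exact ⟨l₁, a, l₂ ++ l₃, b, l₄, by simp, hxx.1.symm.trans hxx.2.1⟩

section Potential

variable {α β G : Type*} [AddCommGroup G] {A : Set β} {s t : β → α} {w : β → G}

def IsCycleCover (A : Set β) (s t : β → α) (g : α → β) : Prop :=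
  (∀ u, g u ∈ A) ∧ (∀ u, s (g u) = u) ∧ Injective (t ∘ g)

lemma IsCycleCover.mono {A' : Set β} {g : α → β} (hg : IsCycleCover A s t g) (h : A ⊆ A') :
    IsCycleCover A' s t g :=
  ⟨fun u => h (hg.1 u), hg.2⟩

lemma isCycleCover_comp_iff {g : α → β} {φ : α → α} (hφ : Injective φ) :
    IsCycleCover A s (φ ∘ t) g ↔ IsCycleCover A s t g :=
  and_congr_right' (and_congr_right' (hφ.of_comp_iff (t ∘ g)))

def IsWalk (A : Set β) (s t : β → α) : α → List β → α → Prop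
  | u, [], v => u = v
  | u, a :: l, v => a ∈ A ∧ s a = u ∧ IsWalk A s t (t a) l v

@[simp] lemma isWalk_nil {u v : α} : IsWalk A s t u [] v ↔ u = v := Iff.rfl

@[simp] lemma isWalk_cons {u v : α} {a : β} {l : List β} :
    IsWalk A s t u (a :: l) v ↔ a ∈ A ∧ s a = u ∧ IsWalk A s t (t a) l v := Iff.rfl

lemma isWalk_append {u v : α} {l₁ l₂ : List β} :
    IsWalk A s t u (l₁ ++ l₂) v ↔ ∃ x, IsWalk A s t u l₁ x ∧ IsWalk A s t x l₂ v := by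
  induction l₁ generalizing u with
  | nil => simp
  | cons a l ih => simp [ih, and_assoc]

lemma IsWalk.mem_of_mem {u v : α} {l : List β} (h : IsWalk A s t u l v) : ∀ a ∈ l, a ∈ A := by
  induction l generalizing u with
  | nil => simp
  | cons b l ih => simpa [h.1] using ih h.2.2

lemma IsWalk.cons_map_eq {u v : α} {l : List β} (h : IsWalk A s t u l v) :
    u :: l.map t = l.map s ++ [v] := by
  induction l generalizing u with
  | nil => exact congrArg (· :: []) h
  | cons a l ih => simp [← h.2.1, ih h.2.2]

lemma IsCycleCover.exists_isWalk_iterate {g : α → β} (hg : IsCycleCover A s t g) (k : ℕ)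
    (u : α) : ∃ l, IsWalk A s t u l ((t ∘ g)^[k] u) := by
  induction k generalizing u with
  | zero => exact ⟨[], rfl⟩
  | succ k ih =>
    obtain ⟨l, hl⟩ := ih (t (g u))
    exact ⟨g u :: l, hg.1 u, hg.2.1 u, hl⟩

lemma IsWalk.perm_map_of_closed {u : α} {l : List β} (h : IsWalk A s t u l u) :
    (l.map t).Perm (l.map s) := by
  have hperm := List.perm_append_singleton u (l.map s)
  rw [← h.cons_map_eq] at hperm
  exact (List.perm_cons u).1 hperm

lemma exists_isCycleCover_of_perm {c : α → β} (hcA : ∀ v, c v ∈ A) (hcs : ∀ v, s (c v) = v)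
    (hct : ∀ v, t (c v) = v) {l : List β} (hlA : ∀ a ∈ l, a ∈ A) (hnd : (l.map s).Nodup)
    (hperm : (l.map t).Perm (l.map s)) :
    ∃ g, IsCycleCover A s t g ∧ (∀ a ∈ l, g (s a) = a) ∧ ∀ v ∉ l.map s, g v = c v := by
  classical
  have hs_inj := List.inj_on_of_nodup_map hnd
  have ht_inj := List.inj_on_of_nodup_map (hperm.nodup_iff.2 hnd)
  let g : α → β := fun v => if h : ∃ a ∈ l, s a = v then h.choose else c v
  have hg_mem : ∀ a ∈ l, g (s a) = a := by
    intro a ha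
    have h : ∃ b ∈ l, s b = s a := ⟨a, ha, rfl⟩
    simp only [g, dif_pos h]
    exact hs_inj h.choose_spec.1 ha h.choose_spec.2
  have hg_not : ∀ v ∉ l.map s, g v = c v := fun v hv => dif_neg (by simpa using hv)
  have hout : ∀ v ∉ l.map s, t (g v) = v := fun v hv => by rw [hg_not v hv, hct]
  have hin : ∀ a ∈ l, t (g (s a)) ∈ l.map s := fun a ha => by
    rw [hg_mem a ha]
    exact hperm.subset (List.mem_map_of_mem ha)
  refine ⟨g, ⟨fun v => ?_, fun v => ?_, fun x y hxy => ?_⟩, hg_mem, hg_not⟩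
  · by_cases hv : v ∈ l.map s
    · obtain ⟨a, ha, rfl⟩ := List.mem_map.1 hv
      rw [hg_mem a ha]
      exact hlA a ha
    · exact hg_not v hv ▸ hcA v
  · by_cases hv : v ∈ l.map s
    · obtain ⟨a, ha, rfl⟩ := List.mem_map.1 hv
      rw [hg_mem a ha]
    · rw [hg_not v hv, hcs]
  · simp only [comp_apply] at hxy
    by_cases hx : x ∈ l.map s <;> by_cases hy : y ∈ l.map s
    · obtain ⟨a, ha, rfl⟩ := List.mem_map.1 hx
      obtain ⟨b, hb, rfl⟩ := List.mem_map.1 hy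
      rw [hg_mem a ha, hg_mem b hb] at hxy
      rw [ht_inj ha hb hxy]
    · obtain ⟨a, ha, rfl⟩ := List.mem_map.1 hx
      exact absurd (hout y hy ▸ hxy ▸ hin a ha) hy
    · obtain ⟨b, hb, rfl⟩ := List.mem_map.1 hy
      exact absurd (hout x hx ▸ hxy.symm ▸ hin b hb) hx
    · rw [← hout x hx, ← hout y hy, hxy]

variable [Fintype α]

lemma sum_map_eq_zero_of_isWalk_of_nodup
    (hcover : ∀ g, IsCycleCover A s t g → ∑ u, w (g u) = 0)
    (hloop : ∀ u, ∃ a ∈ A, s a = u ∧ t a = u ∧ w a = 0)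
    {u : α} {l : List β} (hl : IsWalk A s t u l u) (hnd : (l.map s).Nodup) :
    (l.map w).sum = 0 := by
  classical
  choose c hcA hcs hct hcw using hloop
  obtain ⟨g, hg, hg_mem, hg_not⟩ :=
    exists_isCycleCover_of_perm hcA hcs hct hl.mem_of_mem hnd hl.perm_map_of_closed
  rw [← hcover g hg, ← sum_add_sum_compl (l.map s).toFinset, List.sum_toFinset _ hnd,
    sum_eq_zero fun v hv => by rw [hg_not v (by simpa using hv), hcw], add_zero, List.map_map]
  exact congrArg List.sum (List.map_congr_left fun a ha => by simp [hg_mem a ha])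

lemma sum_map_eq_zero_of_isWalk
    (hcover : ∀ g, IsCycleCover A s t g → ∑ u, w (g u) = 0)
    (hloop : ∀ u, ∃ a ∈ A, s a = u ∧ t a = u ∧ w a = 0)
    {u : α} {l : List β} (hl : IsWalk A s t u l u) : (l.map w).sum = 0 := by
  induction hn : l.length using Nat.strong_induction_on generalizing u l with
  | _ n ih =>
  by_cases hnd : (l.map s).Nodup
  · exact sum_map_eq_zero_of_isWalk_of_nodup hcover hloop hl hnd
  obtain ⟨l₁, a, l₂, b, l₃, rfl, hab⟩ := List.exists_eq_append_of_not_nodup_map hnd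
  obtain ⟨y, hy, hbA, hby, h₃⟩ := isWalk_append.1 hl
  obtain ⟨x, h₁, haA, hax, h₂⟩ := isWalk_append.1 hy
  have hxy : x = y := by rw [← hax, ← hby, hab]
  have e₁ := ih _ (by simp at hn ⊢; omega) (l := a :: l₂) ⟨haA, hax, hxy ▸ h₂⟩ rfl
  have e₂ := ih _ (by simp at hn ⊢; omega) (l := l₁ ++ b :: l₃)
    (isWalk_append.2 ⟨x, h₁, hbA, hby.trans hxy.symm, h₃⟩) rfl
  simp only [List.map_append, List.map_cons, List.sum_append, List.sum_cons] at e₁ e₂ ⊢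
  linear_combination (norm := abel) e₁ + e₂

lemma exists_isWalk_target_source (hA : ∀ a ∈ A, ∃ g, IsCycleCover A s t g ∧ g (s a) = a)
    {a : β} (ha : a ∈ A) : ∃ l, IsWalk A s t (t a) l (s a) := by
  obtain ⟨g, hg, hga⟩ := hA a ha
  let σ : Equiv.Perm α := Equiv.ofBijective _ (Finite.injective_iff_bijective.1 hg.2.2)
  have hσ : (t ∘ g)^[orderOf σ] (s a) = s a := by
    rw [← show ⇑(σ ^ orderOf σ) = (t ∘ g)^[orderOf σ] from Equiv.Perm.coe_pow σ _,
      pow_orderOf_eq_one, Equiv.Perm.coe_one, id]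
  have hta : t a = (t ∘ g) (s a) := by rw [comp_apply, hga]
  obtain ⟨l, hl⟩ := hg.exists_isWalk_iterate (orderOf σ - 1) (t a)
  rw [hta, ← iterate_succ_apply, Nat.succ_eq_add_one, Nat.sub_add_cancel (orderOf_pos σ), hσ] at hl
  exact ⟨l, hta ▸ hl⟩

lemma IsWalk.exists_reverse (hA : ∀ a ∈ A, ∃ g, IsCycleCover A s t g ∧ g (s a) = a)
    {u v : α} {l : List β} (h : IsWalk A s t u l v) : ∃ l', IsWalk A s t v l' u := by
  induction l generalizing u with
  | nil => exact ⟨[], h.symm⟩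
  | cons a l ih =>
    obtain ⟨l₁, h₁⟩ := ih h.2.2
    obtain ⟨l₂, h₂⟩ := exists_isWalk_target_source hA h.1
    exact ⟨l₁ ++ l₂, isWalk_append.2 ⟨t a, h₁, h.2.1 ▸ h₂⟩⟩

lemma sum_map_eq_of_isWalk
    (hcover : ∀ g, IsCycleCover A s t g → ∑ u, w (g u) = 0)
    (hloop : ∀ u, ∃ a ∈ A, s a = u ∧ t a = u ∧ w a = 0)
    (hA : ∀ a ∈ A, ∃ g, IsCycleCover A s t g ∧ g (s a) = a)
    {u v : α} {l₁ l₂ : List β} (h₁ : IsWalk A s t u l₁ v) (h₂ : IsWalk A s t u l₂ v) :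
    (l₁.map w).sum = (l₂.map w).sum := by
  obtain ⟨l, hl⟩ := h₂.exists_reverse hA
  have e₁ := sum_map_eq_zero_of_isWalk hcover hloop (isWalk_append.2 ⟨v, h₁, hl⟩)
  have e₂ := sum_map_eq_zero_of_isWalk hcover hloop (isWalk_append.2 ⟨v, h₂, hl⟩)
  rw [List.map_append, List.sum_append] at e₁ e₂
  exact add_right_cancel (e₁.trans e₂.symm)

theorem exists_potential
    (hcover : ∀ g, IsCycleCover A s t g → ∑ u, w (g u) = 0)
    (hloop : ∀ u, ∃ a ∈ A, s a = u ∧ t a = u ∧ w a = 0)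
    (hA : ∀ a ∈ A, ∃ g, IsCycleCover A s t g ∧ g (s a) = a) :
    ∃ p : α → G, ∀ a ∈ A, p (t a) = p (s a) + w a := by
  -- `p u` is the weight of a walk to `u` from a fixed representative of its strong component.
  let r : Setoid α :=
    ⟨fun u v => ∃ l, IsWalk A s t u l v,
      ⟨fun _ => ⟨[], rfl⟩, fun ⟨_, h⟩ => h.exists_reverse hA,
        fun ⟨l₁, h₁⟩ ⟨l₂, h₂⟩ => ⟨l₁ ++ l₂, isWalk_append.2 ⟨_, h₁, h₂⟩⟩⟩⟩
  choose l hl using fun u => Quotient.mk_out (s := r) u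
  refine ⟨fun u => ((l u).map w).sum, fun a ha => ?_⟩
  have hroot : (Quotient.mk r (s a)).out = (Quotient.mk r (t a)).out :=
    congrArg Quotient.out (Quotient.sound ⟨[a], ha, rfl, rfl⟩)
  have hwalk : IsWalk A s t (Quotient.mk r (t a)).out (l (s a) ++ [a]) (t a) :=
    isWalk_append.2 ⟨s a, hroot ▸ hl (s a), ha, rfl, rfl⟩
  simpa using sum_map_eq_of_isWalk hcover hloop hA (hl (t a)) hwalk

end Potential

section ColoredMatching

variable {n : ℕ}

def red (e : ColEdge n) : ZMod 2 := if e.2.2 then 1 else 0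

def IsAllowed (E : Finset (ColEdge n)) (e : ColEdge n) : Prop := ∃ M, IsPM E M ∧ e ∈ M

lemma natCast_card_filter_red (M : Finset (ColEdge n)) :
    ((M.filter fun e => e.2.2 = true).card : ZMod 2) = ∑ e ∈ M, red e := by
  rw [natCast_card_filter]
  rfl

lemma isPM_image {E : Finset (ColEdge n)} {g : Fin n → ColEdge n}
    (hg : IsCycleCover E Prod.fst (fun e => e.2.1) g) : IsPM E (univ.image g) := by
  have hbij := Finite.injective_iff_bijective.1 hg.2.2
  refine ⟨fun e he => ?_, fun u => ?_, fun v => ?_⟩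
  · obtain ⟨u, -, rfl⟩ := mem_image.1 he
    exact hg.1 u
  · rw [card_eq_one]
    refine ⟨g u, eq_singleton_iff_unique_mem.2 ⟨by simp [hg.2.1 u], ?_⟩⟩
    simp only [mem_filter, mem_image, mem_univ, true_and]
    rintro _ ⟨⟨w, rfl⟩, rfl⟩
    rw [hg.2.1 w]
  · obtain ⟨u, rfl⟩ := hbij.2 v
    rw [card_eq_one]
    refine ⟨g u, eq_singleton_iff_unique_mem.2 ⟨by simp, ?_⟩⟩
    simp only [mem_filter, mem_image, mem_univ, true_and]
    rintro _ ⟨⟨w, rfl⟩, h⟩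
    rw [hg.2.2 h]

lemma IsPM.exists_isCycleCover {E M : Finset (ColEdge n)} (hM : IsPM E M) :
    ∃ g, IsCycleCover M Prod.fst (fun e => e.2.1) g ∧ univ.image g = M := by
  choose g hg using fun u => card_eq_one.1 (hM.2.1 u)
  have hmem : ∀ u, g u ∈ M.filter fun e => e.1 = u := fun u => hg u ▸ mem_singleton_self _
  have huniq : ∀ e ∈ M, e = g e.1 := fun e he =>
    mem_singleton.1 (hg e.1 ▸ mem_filter.2 ⟨he, rfl⟩)
  refine ⟨g, ⟨fun u => (mem_filter.1 (hmem u)).1, fun u => (mem_filter.1 (hmem u)).2,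
    fun u u' h => ?_⟩, ?_⟩
  · have h₁ := mem_filter.1 (hmem u)
    have h₂ := mem_filter.1 (hmem u')
    have := card_le_one.1 (hM.2.2 (g u).2.1).le _ (mem_filter.2 ⟨h₁.1, rfl⟩) _
      (mem_filter.2 ⟨h₂.1, h.symm⟩)
    rw [← h₁.2, ← h₂.2, this]
  · ext e
    simp only [mem_image, mem_univ, true_and]
    exact ⟨fun ⟨u, hu⟩ => hu ▸ (mem_filter.1 (hmem u)).1, fun he => ⟨e.1, (huniq e he).symm⟩⟩

lemma sum_red_image {A : Set (ColEdge n)} {t : ColEdge n → Fin n} {g : Fin n → ColEdge n}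
    (hg : IsCycleCover A Prod.fst t g) : ∑ e ∈ univ.image g, red e = ∑ u, red (g u) :=
  sum_image fun _ _ _ _ h => (LeftInverse.injective hg.2.1) h

lemma sum_add_sum_eq_of_isPM {E M : Finset (ColEdge n)} (hM : IsPM E M)
    {P Q : Fin n → ZMod 2} (hPQ : ∀ e ∈ M, P e.1 + Q e.2.1 = red e + 1) :
    ∑ u, P u + ∑ v, Q v = ∑ e ∈ M, red e + n := by
  obtain ⟨m, hm, rfl⟩ := hM.exists_isCycleCover
  rw [← (Finite.injective_iff_bijective.1 hm.2.2).sum_comp Q, ← sum_add_distrib, sum_red_image hm]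
  simp only [comp_apply]
  rw [sum_congr rfl fun u _ => hm.2.1 u ▸ hPQ (m u) (hm.1 u), sum_add_distrib]
  simp

theorem exists_labeling {E M₀ : Finset (ColEdge n)} (hM₀ : IsPM E M₀)
    (heven : ∀ M, IsPM E M → ∑ e ∈ M, red e = 0) :
    ∃ P Q : Fin n → ZMod 2, ∀ e, IsAllowed E e → P e.1 + Q e.2.1 = red e + 1 := by
  obtain ⟨m, hm, hM₀m⟩ := hM₀.exists_isCycleCover
  -- The arc of `e` goes from `e.1` to the `M₀`-partner of `e.2.1`.
  let μ : Fin n ≃ Fin n := Equiv.ofBijective _ (Finite.injective_iff_bijective.1 hm.2.2)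
  let t : ColEdge n → Fin n := μ.symm ∘ fun e => e.2.1
  have hcover (g : Fin n → ColEdge n) (hg : IsCycleCover {e | IsAllowed E e} Prod.fst t g) :
      ∑ u, (red (g u) + red (m (t (g u)))) = 0 := by
    have hg' := (isCycleCover_comp_iff μ.symm.injective).1 hg
    have hPM : IsPM E (univ.image g) :=
      isPM_image (hg'.mono fun e ⟨M, hM, he⟩ => hM.1 he)
    rw [sum_add_distrib, ← sum_red_image hg, heven _ hPM, zero_add, ← heven _ hM₀, ← hM₀m,
      sum_red_image hm]
    exact (Finite.injective_iff_bijective.1 hg.2.2).sum_comp fun u => red (m u)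
  have hloop (u : Fin n) : ∃ e ∈ {e | IsAllowed E e}, e.1 = u ∧ t e = u ∧
      red e + red (m (t e)) = 0 := by
    have htm : t (m u) = u := μ.symm_apply_apply u
    refine ⟨m u, ⟨M₀, hM₀, hM₀m ▸ mem_image_of_mem m (mem_univ u)⟩, hm.2.1 u, htm, ?_⟩
    rw [htm, CharTwo.add_self_eq_zero]
  have hallowed (e : ColEdge n) (he : e ∈ {e | IsAllowed E e}) :
      ∃ g, IsCycleCover {e | IsAllowed E e} Prod.fst t g ∧ g e.1 = e := by
    obtain ⟨M, hM, heM⟩ := he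
    obtain ⟨g, hg, rfl⟩ := hM.exists_isCycleCover
    obtain ⟨u, -, rfl⟩ := mem_image.1 heM
    refine ⟨g, (isCycleCover_comp_iff μ.symm.injective).2
      (hg.mono fun e he => ⟨_, hM, he⟩), by rw [hg.2.1]⟩
  obtain ⟨p, hp⟩ := exists_potential hcover hloop hallowed
  refine ⟨p, fun v => p (μ.symm v) + red (m (μ.symm v)) + 1, fun e he => ?_⟩
  have h := hp e he
  simp only [t, comp_apply] at h
  simp only [h]
  linear_combination CharTwo.add_self_eq_zero (p e.1 + red (m (μ.symm e.2.1)))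

def edgeMatrix (E : Finset (ColEdge n)) (x : ColEdge n → ℝ) : Matrix (Fin n) (Fin n) ℝ :=
  fun u v => ∑ e ∈ E with e.1 = u ∧ e.2.1 = v, x e

lemma edgeMatrix_mem_doublyStochastic {E : Finset (ColEdge n)} {x : ColEdge n → ℝ}
    (hx0 : ∀ e ∈ E, 0 ≤ x e)
    (hrow : ∀ u : Fin n, ∑ e ∈ E.filter (fun e => e.1 = u), x e = 1)
    (hcol : ∀ v : Fin n, ∑ e ∈ E.filter (fun e => e.2.1 = v), x e = 1) :
    edgeMatrix E x ∈ doublyStochastic ℝ (Fin n) := by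
  refine mem_doublyStochastic_iff_sum.2 ⟨fun u v => sum_nonneg fun e he => hx0 e
    (mem_filter.1 he).1, fun u => ?_, fun v => ?_⟩
  · rw [← hrow u, ← sum_fiberwise (E.filter fun e => e.1 = u) (fun e => e.2.1) x]
    simp only [edgeMatrix, filter_filter]
  · rw [← hcol v, ← sum_fiberwise (E.filter fun e => e.2.1 = v) Prod.fst x]
    simp only [edgeMatrix, filter_filter, and_comm]

theorem isAllowed_of_ne_zero {E : Finset (ColEdge n)} {x : ColEdge n → ℝ}
    (hx0 : ∀ e ∈ E, 0 ≤ x e)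
    (hrow : ∀ u : Fin n, ∑ e ∈ E.filter (fun e => e.1 = u), x e = 1)
    (hcol : ∀ v : Fin n, ∑ e ∈ E.filter (fun e => e.2.1 = v), x e = 1)
    {e₀ : ColEdge n} (he₀ : e₀ ∈ E) (hx : x e₀ ≠ 0) : IsAllowed E e₀ := by
  -- A permutation through `(e₀.1, e₀.2.1)` with positive Birkhoff coefficient is supported on `E`.
  obtain ⟨c, hc0, -, hcX⟩ := exists_eq_sum_perm_of_mem_doublyStochastic
    (edgeMatrix_mem_doublyStochastic hx0 hrow hcol)
  have hXc : ∀ u v, edgeMatrix E x u v = ∑ σ : Equiv.Perm (Fin n), if σ u = v then c σ else 0 := by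
    intro u v
    rw [← hcX]
    simp [Matrix.sum_apply, Equiv.Perm.permMatrix, PEquiv.toMatrix_apply]
  obtain ⟨σ, -, hσ⟩ : ∃ σ ∈ univ, 0 < if σ e₀.1 = e₀.2.1 then c σ else 0 := by
    rw [← sum_pos_iff_of_nonneg fun σ _ => by split_ifs <;> simp [hc0], ← hXc]
    exact (lt_of_le_of_ne (hx0 e₀ he₀) (Ne.symm hx)).trans_le
      (single_le_sum (fun e he => hx0 e (mem_filter.1 he).1) (by simp [he₀]))
  have hσe₀ : σ e₀.1 = e₀.2.1 := by by_contra h; simp [h] at hσ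
  have hedge (u : Fin n) : ∃ e ∈ E, e.1 = u ∧ e.2.1 = σ u := by
    have hle := single_le_sum (f := fun τ : Equiv.Perm (Fin n) => if τ u = σ u then c τ else 0)
      (fun τ _ => by split_ifs <;> simp [hc0]) (mem_univ σ)
    have hpos : 0 < edgeMatrix E x u (σ u) := by
      rw [hXc]
      exact hσ.trans_le (by simpa [hσe₀] using hle)
    obtain ⟨e, he⟩ := nonempty_of_sum_ne_zero hpos.ne'
    exact ⟨e, by simpa using he⟩
  choose f hfE hf₁ hf₂ using hedge
  let g : Fin n → ColEdge n := fun u => if u = e₀.1 then e₀ else f u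
  have hg : IsCycleCover E Prod.fst (fun e => e.2.1) g := by
    have hg₂ : ∀ u, (g u).2.1 = σ u := fun u => by
      by_cases hu : u = e₀.1 <;> simp [g, hu, hf₂, hσe₀]
    refine ⟨fun u => ?_, fun u => ?_, fun u u' h => σ.injective ?_⟩
    · by_cases hu : u = e₀.1 <;> simp [g, hu, he₀, hfE]
    · by_cases hu : u = e₀.1 <;> simp [g, hu, hf₁]
    · simpa only [comp_apply, hg₂] using h
  exact ⟨_, isPM_image hg, mem_image.2 ⟨e₀.1, mem_univ _, by simp [g]⟩⟩

lemma natCast_card_filter_decide_eq_one {α : Type*} [Fintype α] (P : α → ZMod 2) :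
    ((univ.filter fun u => decide (P u = 1) = true).card : ZMod 2) = ∑ u, P u := by
  rw [natCast_card_filter]
  exact sum_congr rfl fun u _ => by generalize P u = z; revert z; decide

lemma not_violates_of_add_eq {P Q : Fin n → ZMod 2} {e : ColEdge n}
    (h : P e.1 + Q e.2.1 = red e + 1) :
    ¬ Violates (fun u => decide (P u = 1)) (fun v => decide (Q v = 1)) e := by
  have key : ∀ (a b : ZMod 2) (c : Bool), a + b = (if c then 1 else 0) + 1 →
      ¬ ((c = false ∧ decide (a = 1) = decide (b = 1)) ∨
        (c = true ∧ decide (a = 1) ≠ decide (b = 1))) := by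
    decide
  exact key _ _ _ h

end ColoredMatching

/-- If the colored bipartite graph has a perfect matching with an even number of
red edges but none with an odd number of red edges, then the LP relaxation
(degree equalities, labeling inequalities for all labelings of the right parity,
nonnegativity) is infeasible. -/
theorem stmt13 {n : ℕ} (E : Finset (ColEdge n))
    (heven : ∃ M, IsPM E M ∧ Even (M.filter (fun e => e.2.2 = true)).card)
    (hnoodd : ¬ ∃ M, IsPM E M ∧ Odd (M.filter (fun e => e.2.2 = true)).card) :
    ¬ ∃ x : ColEdge n → ℝ,
        (∀ e ∈ E, 0 ≤ x e) ∧
        (∀ u : Fin n, ∑ e ∈ E.filter (fun e => e.1 = u), x e = 1) ∧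
        (∀ v : Fin n, ∑ e ∈ E.filter (fun e => e.2.1 = v), x e = 1) ∧
        (∀ LU LV : Fin n → Bool,
          ((Finset.univ.filter (fun u => LU u = true)).card +
            (Finset.univ.filter (fun v => LV v = true)).card) % 2 = n % 2 →
          1 ≤ ∑ e ∈ E.filter (fun e => Violates LU LV e), x e) := by
  rintro ⟨x, hx0, hrow, hcol, hlab⟩
  obtain ⟨M₀, hM₀, -⟩ := heven
  have hred (M : Finset (ColEdge n)) (hM : IsPM E M) : ∑ e ∈ M, red e = 0 := by
    rw [← natCast_card_filter_red, ZMod.natCast_eq_zero_iff_even]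
    exact Nat.not_odd_iff_even.1 fun h => hnoodd ⟨M, hM, h⟩
  obtain ⟨P, Q, hPQ⟩ := exists_labeling hM₀ hred
  have hparity := sum_add_sum_eq_of_isPM hM₀ fun e he => hPQ e ⟨M₀, hM₀, he⟩
  rw [hred M₀ hM₀, zero_add, ← natCast_card_filter_decide_eq_one P,
    ← natCast_card_filter_decide_eq_one Q, ← Nat.cast_add, ZMod.natCast_eq_natCast_iff'] at hparity
  have hviolated := hlab _ _ hparity
  rw [sum_eq_zero fun e he => by_contra fun hx => not_violates_of_add_eq
    (hPQ e (isAllowed_of_ne_zero hx0 hrow hcol (mem_filter.1 he).1 hx)) (mem_filter.1 he).2]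
    at hviolated
  exact absurd hviolated zero_lt_one.not_ge
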